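/- Let T_t^Dir be the Dirichlet heat semigroup on (0,∞): (T_t^Dir g)(x) = (4πt)^{-1/2} ∫_0^∞ [e^{-(x−y)²/(4t)} − e^{-(x+y)²/(4t)}] g(y) dy. For α > 0, define (T̃_t^α g)(x) = (4πt)^{-1/2} e^{2αx} ∫_x^∞ e^{-2αz} ∫_0^∞ [((z−y+4αt)/(2t)) e^{-(z−y)²/(4t)} + ((z+y−4αt)/(2t)) e^{-(z+y)²/(4t)}] g(y) dy dz. Then for every bounded continuous g : (0,∞) → ℝ with compact support, every t > 0 and x > 0, lim_{α→∞} (T̃_t^α g)(x) = (T_t^Dir g)(x). -/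

import Mathlib

/-!
Write `G u = exp (-u² / (4t))`. For fixed `y`, the `z`-integrand of `Ttilde` is
`-∂_z [e^{-2αz} (G(z-y) + G(z+y))] - 4α e^{-2αz} G(z+y)`, so integrating over `z > x` and
multiplying by `e^{2αx}` turns the kernel of `Ttilde` into
`G(x-y) + G(x+y) - 2 · 2α ∫_{z>x} e^{-2α(z-x)} G(z+y) dz`.
The exponential average tends to `G(x+y)` as `α → ∞`, and the kernel stays bounded by `4`, so
dominated convergence gives the Dirichlet kernel `G(x-y) - G(x+y)`; the compact support of `g`
justifies exchanging the `z`- and `y`-integrals.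
-/

open Real MeasureTheory Set Filter Topology

/-- Dirichlet heat semigroup on the half-line. -/
noncomputable def TDir (t : ℝ) (g : ℝ → ℝ) (x : ℝ) : ℝ :=
  ∫ y in Set.Ioi (0 : ℝ),
    (Real.exp (-(x - y) ^ 2 / (4 * t)) - Real.exp (-(x + y) ^ 2 / (4 * t)))
      * g y / Real.sqrt (4 * Real.pi * t)

/-- The semigroup associated to the Robin problem on the half-line. -/
noncomputable def Ttilde (α t : ℝ) (g : ℝ → ℝ) (x : ℝ) : ℝ :=
  Real.exp (2 * α * x) *
    ∫ z in Set.Ici x, Real.exp (-2 * α * z) *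
      (∫ y in Set.Ioi (0 : ℝ),
        (((z - y + 4 * α * t) / (2 * t)) * Real.exp (-(z - y) ^ 2 / (4 * t))
          + ((z + y - 4 * α * t) / (2 * t)) * Real.exp (-(z + y) ^ 2 / (4 * t)))
        * g y) / Real.sqrt (4 * Real.pi * t)

noncomputable def heatGauss (t u : ℝ) : ℝ := exp (-u ^ 2 / (4 * t))

lemma heatGauss_nonneg (t u : ℝ) : 0 ≤ heatGauss t u := (exp_pos _).le

lemma heatGauss_le_one {t : ℝ} (ht : 0 ≤ t) (u : ℝ) : heatGauss t u ≤ 1 :=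
  exp_le_one_iff.2 (div_nonpos_of_nonpos_of_nonneg (neg_nonpos.2 (sq_nonneg u)) (by positivity))

lemma abs_heatGauss_le {t : ℝ} (ht : 0 ≤ t) (u : ℝ) : |heatGauss t u| ≤ 1 := by
  rw [abs_of_nonneg (heatGauss_nonneg t u)]
  exact heatGauss_le_one ht u

@[fun_prop]
lemma continuous_heatGauss (t : ℝ) : Continuous (heatGauss t) := by
  unfold heatGauss
  fun_prop

lemma hasDerivAt_heatGauss (t u : ℝ) :
    HasDerivAt (heatGauss t) (-(u / (2 * t)) * heatGauss t u) u := by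
  unfold heatGauss
  have hexponent : HasDerivAt (fun u => -u ^ 2 / (4 * t)) (-(2 * u) / (4 * t)) u := by
    simpa using ((hasDerivAt_pow 2 u).fun_neg.div_const (4 * t))
  convert hexponent.exp using 1
  ring

lemma integral_Ioi_comp_add_right {E : Type*} [NormedAddCommGroup E] [NormedSpace ℝ E]
    (f : ℝ → E) (a c : ℝ) : ∫ v in Ioi a, f (v + c) = ∫ z in Ioi (a + c), f z := by
  have h := (measurePreserving_add_right volume c).setIntegral_preimage_emb
    (measurableEmbedding_addRight c) f (Ioi (a + c))
  rwa [preimage_add_const_Ioi, add_sub_cancel_right] at h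

lemma integrableOn_abs_mul_exp_mul_Ioi {c : ℝ} (hc : c < 0) (a : ℝ) :
    IntegrableOn (fun z => |z| * exp (c * z)) (Ioi a) := by
  have hc' : 0 < -c / 2 := by linarith
  refine integrable_of_isBigO_exp_neg hc' (by fun_prop) ?_
  have habs : (fun z : ℝ => |z|) =O[atTop] fun z => exp (-c / 2 * z) := by
    simpa using (isLittleO_pow_exp_pos_mul_atTop 1 hc').isBigO.norm_left
  refine (habs.mul (Asymptotics.isBigO_refl (fun z => exp (c * z)) atTop)).congr_right
    fun z => ?_
  rw [← exp_add]
  ring_nf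

section ExpAverage

variable {h : ℝ → ℝ} {x l M : ℝ}

lemma mul_integral_Ioi_exp_neg_mul_sub (hl : 0 < l) :
    l * ∫ z in Ioi x, exp (-(l * (z - x))) * h z = ∫ v in Ioi 0, exp (-v) * h (x + v / l) := by
  have hscale := integral_comp_mul_left_Ioi' (fun v => exp (-v) * h (x + v / l)) 0 hl
  have hshift := integral_Ioi_comp_add_right (fun z => exp (-(l * (z - x))) * h z) 0 x
  simp only [mul_zero, smul_eq_mul, mul_div_cancel_left₀ _ hl.ne', zero_add,
    add_sub_cancel_right] at hscale hshift
  rw [← hscale, ← hshift]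
  simp only [add_comm]

lemma abs_mul_integral_Ioi_exp_neg_mul_sub_le (hM : ∀ z, |h z| ≤ M) (hl : 0 < l) :
    |l * ∫ z in Ioi x, exp (-(l * (z - x))) * h z| ≤ M := by
  rw [mul_integral_Ioi_exp_neg_mul_sub hl]
  calc |∫ v in Ioi 0, exp (-v) * h (x + v / l)| ≤ ∫ v in Ioi 0, exp (-v) * M := by
        refine (Real.norm_eq_abs _).symm.trans_le <| norm_integral_le_of_norm_le
          ((integrableOn_exp_neg_Ioi 0).mul_const M) (Eventually.of_forall fun (v : ℝ) => ?_)
        rw [norm_mul, norm_of_nonneg (exp_pos _).le, Real.norm_eq_abs]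
        gcongr
        exact hM _
    _ = M := by rw [integral_mul_const, integral_exp_neg_Ioi_zero, one_mul]

lemma tendsto_mul_integral_Ioi_exp_neg_mul_sub (hmeas : Measurable h) (hM : ∀ z, |h z| ≤ M)
    (hcont : ContinuousWithinAt h (Ioi x) x) :
    Tendsto (fun l => l * ∫ z in Ioi x, exp (-(l * (z - x))) * h z) atTop (𝓝 (h x)) := by
  have hlim : Tendsto (fun l => ∫ v in Ioi 0, exp (-v) * h (x + v / l)) atTop
      (𝓝 (∫ v in Ioi 0, exp (-v) * h x)) := by
    refine tendsto_integral_filter_of_dominated_convergence (fun v => exp (-v) * M)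
      (Eventually.of_forall fun l => ?_) (Eventually.of_forall fun l => ?_)
      ((integrableOn_exp_neg_Ioi 0).mul_const M) ?_
    · exact ((measurable_exp.comp measurable_neg).mul
        (hmeas.comp (by fun_prop))).aestronglyMeasurable
    · refine Eventually.of_forall fun v => ?_
      rw [norm_mul, norm_of_nonneg (exp_pos _).le, Real.norm_eq_abs]
      gcongr
      exact hM _
    · filter_upwards [ae_restrict_mem measurableSet_Ioi] with (v : ℝ) (hv : 0 < v)
      have hshrink : Tendsto (fun l => x + v / l) atTop (𝓝[>] x) := by
        refine tendsto_nhdsWithin_iff.2 ⟨?_, ?_⟩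
        · simpa using tendsto_const_nhds.add
            (tendsto_const_nhds.div_atTop (tendsto_id (α := ℝ)))
        · filter_upwards [eventually_gt_atTop 0] with l hl
          exact lt_add_of_pos_right x (div_pos hv hl)
      exact (hcont.tendsto.comp hshrink).const_mul _
  rw [integral_mul_const, integral_exp_neg_Ioi_zero, one_mul] at hlim
  exact hlim.congr' ((eventually_gt_atTop 0).mono fun l hl =>
    (mul_integral_Ioi_exp_neg_mul_sub hl).symm)

end ExpAverage

noncomputable def robinIntegrand (α t z y : ℝ) : ℝ :=
  (z - y + 4 * α * t) / (2 * t) * heatGauss t (z - y)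
    + (z + y - 4 * α * t) / (2 * t) * heatGauss t (z + y)

section RobinIntegrand

variable {α t : ℝ}

@[fun_prop]
lemma Continuous.robinIntegrand {X : Type*} [TopologicalSpace X] {f g : X → ℝ}
    (hf : Continuous f) (hg : Continuous g) :
    Continuous fun p => robinIntegrand α t (f p) (g p) := by
  unfold _root_.robinIntegrand
  fun_prop

lemma abs_robinIntegrand_le (hα : 0 ≤ α) (ht : 0 < t) (z y : ℝ) :
    |robinIntegrand α t z y| ≤ (|z| + |y|) / t + 4 * α := by
  have hterm : ∀ a u : ℝ, |a| ≤ |z| + |y| + 4 * α * t →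
      |a / (2 * t) * heatGauss t u| ≤ (|z| + |y| + 4 * α * t) / (2 * t) := by
    intro a u ha
    rw [abs_mul, abs_div, abs_of_pos (by positivity : 0 < 2 * t)]
    calc |a| / (2 * t) * |heatGauss t u| ≤ |a| / (2 * t) * 1 := by
          gcongr
          exact abs_heatGauss_le ht.le u
      _ ≤ (|z| + |y| + 4 * α * t) / (2 * t) := by
          rw [mul_one]
          gcongr
  have hαt : 0 ≤ 4 * α * t := by positivity
  calc |robinIntegrand α t z y|
      ≤ (|z| + |y| + 4 * α * t) / (2 * t) + (|z| + |y| + 4 * α * t) / (2 * t) := by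
        refine (abs_add_le _ _).trans (add_le_add (hterm _ _ ?_) (hterm _ _ ?_)) <;>
          refine abs_le.2 ⟨?_, ?_⟩ <;>
          linarith [le_abs_self z, neg_abs_le z, le_abs_self y, neg_abs_le y]
    _ = (|z| + |y|) / t + 4 * α := by field_simp; ring

lemma hasDerivAt_robinPrimitive (ht : t ≠ 0) (y z : ℝ) :
    HasDerivAt (fun z => exp (-2 * α * z) * (heatGauss t (z - y) + heatGauss t (z + y)))
      (-(exp (-2 * α * z) * robinIntegrand α t z y
        + 4 * α * (exp (-2 * α * z) * heatGauss t (z + y)))) z := by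
  have hexp : HasDerivAt (fun z => exp (-2 * α * z)) (exp (-2 * α * z) * (-2 * α)) z := by
    simpa using ((hasDerivAt_id z).const_mul (-2 * α)).exp
  have hsum := ((hasDerivAt_heatGauss t (z - y)).comp_sub_const z y).add
    ((hasDerivAt_heatGauss t (z + y)).comp_add_const z y)
  refine (hexp.mul hsum).congr_deriv ?_
  simp only [robinIntegrand, Pi.add_apply]
  field_simp
  ring

lemma integrableOn_exp_mul_robinIntegrand (hα : 0 < α) (ht : 0 < t) (x y : ℝ) :
    IntegrableOn (fun z => exp (-2 * α * z) * robinIntegrand α t z y) (Ioi x) := by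
  have hα' : -2 * α < 0 := by linarith
  refine Integrable.mono' (((integrableOn_abs_mul_exp_mul_Ioi hα' x).const_mul t⁻¹).add
    ((integrableOn_exp_mul_Ioi hα' x).const_mul (|y| / t + 4 * α)))
    (Continuous.aestronglyMeasurable (by fun_prop))
    (Eventually.of_forall fun z => ?_)
  rw [norm_mul, norm_of_nonneg (exp_pos _).le, Real.norm_eq_abs]
  calc exp (-2 * α * z) * |robinIntegrand α t z y|
      ≤ exp (-2 * α * z) * ((|z| + |y|) / t + 4 * α) := by
        gcongr
        exact abs_robinIntegrand_le hα.le ht z y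
    _ = t⁻¹ * (|z| * exp (-2 * α * z)) + (|y| / t + 4 * α) * exp (-2 * α * z) := by ring

lemma integral_Ioi_exp_mul_robinIntegrand (hα : 0 < α) (ht : 0 < t) (x y : ℝ) :
    ∫ z in Ioi x, exp (-2 * α * z) * robinIntegrand α t z y
      = exp (-2 * α * x) * (heatGauss t (x - y) + heatGauss t (x + y))
        - 4 * α * ∫ z in Ioi x, exp (-2 * α * z) * heatGauss t (z + y) := by
  have hα' : -2 * α < 0 := by linarith
  have hdecay : Tendsto (fun z => exp (-2 * α * z)) atTop (𝓝 0) :=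
    tendsto_exp_atBot.comp (tendsto_id.const_mul_atTop_of_neg hα')
  have hprimitive : Tendsto
      (fun z => exp (-2 * α * z) * (heatGauss t (z - y) + heatGauss t (z + y)))
      atTop (𝓝 0) := by
    refine squeeze_zero_norm (fun z => ?_) (by simpa only [zero_mul] using hdecay.mul_const 2)
    rw [norm_mul, norm_of_nonneg (exp_pos _).le, Real.norm_eq_abs]
    gcongr
    have h₁ := abs_heatGauss_le ht.le (z - y)
    have h₂ := abs_heatGauss_le ht.le (z + y)
    linarith [abs_add_le (heatGauss t (z - y)) (heatGauss t (z + y))]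
  have hgauss : IntegrableOn (fun z => exp (-2 * α * z) * heatGauss t (z + y)) (Ioi x) :=
    (integrableOn_exp_mul_Ioi hα' x).mul_bdd (by fun_prop)
      (Eventually.of_forall fun z => abs_heatGauss_le ht.le (z + y))
  have hftc := integral_Ioi_of_hasDerivAt_of_tendsto'
    (fun z _ => hasDerivAt_robinPrimitive ht.ne' y z)
    ((integrableOn_exp_mul_robinIntegrand hα ht x y).add (hgauss.const_mul (4 * α))).neg
    hprimitive
  rw [integral_neg, integral_add (integrableOn_exp_mul_robinIntegrand hα ht x y)
    (hgauss.const_mul (4 * α)), integral_const_mul] at hftc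
  linarith

lemma integral_Ioi_exp_mul_integral_robinIntegrand {μ : Measure ℝ} [SFinite μ] {g : ℝ → ℝ}
    (hα : 0 < α) (ht : 0 < t) (hg : Integrable g μ)
    (hyg : Integrable (fun y => y * g y) μ) (x : ℝ) :
    ∫ z in Ioi x, exp (-2 * α * z) * ∫ y, robinIntegrand α t z y * g y ∂μ
      = ∫ y, (∫ z in Ioi x, exp (-2 * α * z) * robinIntegrand α t z y) * g y ∂μ := by
  have hα' : -2 * α < 0 := by linarith
  have hexp := integrableOn_exp_mul_Ioi hα' x
  have hbound : Integrable (fun p : ℝ × ℝ =>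
      t⁻¹ * (|p.1| * exp (-2 * α * p.1)) * ‖g p.2‖
        + t⁻¹ * exp (-2 * α * p.1) * ‖p.2 * g p.2‖
        + 4 * α * exp (-2 * α * p.1) * ‖g p.2‖)
      ((volume.restrict (Ioi x)).prod μ) :=
    ((((integrableOn_abs_mul_exp_mul_Ioi hα' x).const_mul t⁻¹).mul_prod hg.norm).add
      ((hexp.const_mul t⁻¹).mul_prod hyg.norm)).add ((hexp.const_mul (4 * α)).mul_prod hg.norm)
  have hjoint : Integrable (Function.uncurry fun z y =>
      exp (-2 * α * z) * robinIntegrand α t z y * g y) ((volume.restrict (Ioi x)).prod μ) := by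
    refine hbound.mono' ((Continuous.aestronglyMeasurable (by fun_prop)).mul
      hg.aestronglyMeasurable.comp_snd) (Eventually.of_forall fun p => ?_)
    obtain ⟨z, y⟩ := p
    simp only [Function.uncurry_apply_pair, norm_mul, Real.norm_eq_abs, abs_of_pos (exp_pos _)]
    calc exp (-2 * α * z) * |robinIntegrand α t z y| * |g y|
        ≤ exp (-2 * α * z) * ((|z| + |y|) / t + 4 * α) * |g y| := by
          gcongr
          exact abs_robinIntegrand_le hα.le ht z y
      _ = _ := by ring
  simp only [← integral_const_mul, ← integral_mul_const, ← mul_assoc]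
  exact integral_integral_swap hjoint

end RobinIntegrand

noncomputable def robinKernel (α t x y : ℝ) : ℝ :=
  exp (2 * α * x) * ∫ z in Ioi x, exp (-2 * α * z) * robinIntegrand α t z y

section RobinKernel

variable {α t : ℝ}

lemma robinKernel_eq (hα : 0 < α) (ht : 0 < t) (x y : ℝ) :
    robinKernel α t x y = heatGauss t (x - y) + heatGauss t (x + y)
      - 2 * (2 * α * ∫ z in Ioi x, exp (-(2 * α * (z - x))) * heatGauss t (z + y)) := by
  have hshift : exp (2 * α * x) * ∫ z in Ioi x, exp (-2 * α * z) * heatGauss t (z + y)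
      = ∫ z in Ioi x, exp (-(2 * α * (z - x))) * heatGauss t (z + y) := by
    rw [← integral_const_mul]
    congr 1 with z
    rw [← mul_assoc, ← exp_add]
    ring_nf
  have hinv : exp (2 * α * x) * exp (-2 * α * x) = 1 := by
    rw [← exp_add, ← exp_zero]
    ring_nf
  rw [robinKernel, integral_Ioi_exp_mul_robinIntegrand hα ht, ← hshift]
  linear_combination (heatGauss t (x - y) + heatGauss t (x + y)) * hinv

lemma abs_robinKernel_le (hα : 0 < α) (ht : 0 < t) (x y : ℝ) :
    |robinKernel α t x y| ≤ 4 := by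
  have haverage := abs_le.1 <| abs_mul_integral_Ioi_exp_neg_mul_sub_le (x := x)
    (fun z => abs_heatGauss_le ht.le (z + y)) (by positivity : 0 < 2 * α)
  have h₁ := heatGauss_le_one ht.le (x - y)
  have h₂ := heatGauss_le_one ht.le (x + y)
  have h₃ := heatGauss_nonneg t (x - y)
  have h₄ := heatGauss_nonneg t (x + y)
  rw [robinKernel_eq hα ht]
  exact abs_le.2 ⟨by linarith, by linarith⟩

lemma tendsto_robinKernel (ht : 0 < t) (x y : ℝ) :
    Tendsto (fun α => robinKernel α t x y) atTop
      (𝓝 (heatGauss t (x - y) - heatGauss t (x + y))) := by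
  have haverage := (tendsto_mul_integral_Ioi_exp_neg_mul_sub (x := x)
    (h := fun z => heatGauss t (z + y)) (by fun_prop) (fun z => abs_heatGauss_le ht.le (z + y))
    (by fun_prop : Continuous fun z => heatGauss t (z + y)).continuousWithinAt).comp
    (tendsto_id.const_mul_atTop two_pos)
  have hlim := (tendsto_const_nhds (x := heatGauss t (x - y) + heatGauss t (x + y))).sub
    (haverage.const_mul 2)
  rw [show heatGauss t (x - y) + heatGauss t (x + y) - 2 * heatGauss t (x + y)
    = heatGauss t (x - y) - heatGauss t (x + y) by ring] at hlim
  refine hlim.congr' ?_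
  filter_upwards [eventually_gt_atTop 0] with α hα
  exact (robinKernel_eq hα ht x y).symm

lemma stronglyMeasurable_robinKernel (α t x : ℝ) : StronglyMeasurable (robinKernel α t x) := by
  have hintegrand : Continuous fun p : ℝ × ℝ =>
      exp (-2 * α * p.2) * robinIntegrand α t p.2 p.1 := by
    fun_prop
  exact (hintegrand.stronglyMeasurable.integral_prod_right'
    (ν := volume.restrict (Ioi x))).const_mul _

lemma tendsto_integral_robinKernel_mul {μ : Measure ℝ} {g : ℝ → ℝ} (ht : 0 < t) (x : ℝ)
    (hg : Integrable g μ) :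
    Tendsto (fun α => ∫ y, robinKernel α t x y * g y ∂μ) atTop
      (𝓝 (∫ y, (heatGauss t (x - y) - heatGauss t (x + y)) * g y ∂μ)) := by
  refine tendsto_integral_filter_of_dominated_convergence (fun y => 4 * ‖g y‖)
    (Eventually.of_forall fun α =>
      (stronglyMeasurable_robinKernel α t x).aestronglyMeasurable.mul hg.aestronglyMeasurable)
    ?_ (hg.norm.const_mul 4)
    (Eventually.of_forall fun y => (tendsto_robinKernel ht x y).mul_const (g y))
  filter_upwards [eventually_gt_atTop 0] with α hα
  refine Eventually.of_forall fun y => ?_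
  rw [norm_mul, Real.norm_eq_abs]
  gcongr
  exact abs_robinKernel_le hα ht x y

end RobinKernel

section Semigroups

variable {t x : ℝ} {g : ℝ → ℝ}

lemma TDir_eq_integral_div :
    TDir t g x = (∫ y in Ioi 0, (heatGauss t (x - y) - heatGauss t (x + y)) * g y)
      / √(4 * π * t) :=
  integral_div _ _

lemma Ttilde_eq_integral_robinKernel_div {α : ℝ} (hα : 0 < α) (ht : 0 < t)
    (hg : IntegrableOn g (Ioi 0)) (hyg : IntegrableOn (fun y => y * g y) (Ioi 0)) :
    Ttilde α t g x = (∫ y in Ioi 0, robinKernel α t x y * g y) / √(4 * π * t) := by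
  change exp (2 * α * x) * ∫ z in Ici x,
    exp (-2 * α * z) * (∫ y in Ioi 0, robinIntegrand α t z y * g y) / √(4 * π * t) = _
  rw [integral_Ici_eq_integral_Ioi, integral_div,
    integral_Ioi_exp_mul_integral_robinIntegrand hα ht hg hyg, mul_div_assoc',
    ← integral_const_mul]
  simp only [robinKernel, mul_assoc]

end Semigroups

theorem Ttilde_tendsto_TDir_general (t x : ℝ) (ht : 0 < t)
    (g : ℝ → ℝ) (hgc : Continuous g) (hgs : HasCompactSupport g) :
    Tendsto (fun α : ℝ => Ttilde α t g x) atTop (𝓝 (TDir t g x)) := by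
  have hg : IntegrableOn g (Ioi 0) := (hgc.integrable_of_hasCompactSupport hgs).integrableOn
  have hyg : IntegrableOn (fun y => y * g y) (Ioi 0) :=
    ((continuous_id.mul hgc).integrable_of_hasCompactSupport hgs.mul_left).integrableOn
  rw [TDir_eq_integral_div]
  refine ((tendsto_integral_robinKernel_mul ht x hg).div_const _).congr' ?_
  filter_upwards [eventually_gt_atTop 0] with α hα
  exact (Ttilde_eq_integral_robinKernel_div hα ht hg hyg).symm

theorem Ttilde_tendsto_TDir (t x : ℝ) (ht : 0 < t) (hx : 0 < x)
    (g : ℝ → ℝ) (hgc : Continuous g) (hgs : HasCompactSupport g)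
    (hsupp : Function.support g ⊆ Set.Ioi (0 : ℝ)) :
    Tendsto (fun α : ℝ => Ttilde α t g x) atTop (𝓝 (TDir t g x)) :=
  Ttilde_tendsto_TDir_general t x ht g hgc hgs
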